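/- For every s ∈ (0,1) and every λ ≥ 0, one has λ^s = (1/Γ(-s)) ∫₀^∞ (e^{-tλ} - 1)/t^{s+1} dt, where Γ(-s) = Γ(1-s)/(-s). -/

import Mathlib

open MeasureTheory Set Real Filter Topology

/-! Put `g t = (e^{-tλ} - 1) t^{-s}`. Since `|e^{-tλ} - 1| ≤ min (tλ) 1`, `g` vanishes at `0⁺`
and at `∞`, so `∫₀^∞ g' = 0`. Expanding `g'` gives
`s ∫₀^∞ (e^{-tλ} - 1) t^{-s-1} dt = -λ ∫₀^∞ t^{-s} e^{-tλ} dt = -λ^s Γ(1 - s)`. -/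

section

variable {a s lam t : ℝ}

lemma abs_exp_neg_mul_sub_one_le_mul (ht : 0 ≤ t) (hlam : 0 ≤ lam) :
    |exp (-t * lam) - 1| ≤ t * lam := by
  have h₁ := add_one_le_exp (-t * lam)
  have h₂ : exp (-t * lam) ≤ 1 := exp_le_one_iff.mpr (by nlinarith)
  rw [abs_le]
  constructor <;> linarith

lemma abs_exp_neg_mul_sub_one_le_one (ht : 0 ≤ t) (hlam : 0 ≤ lam) :
    |exp (-t * lam) - 1| ≤ 1 := by
  have h₁ := exp_pos (-t * lam)
  have h₂ : exp (-t * lam) ≤ 1 := exp_le_one_iff.mpr (by nlinarith)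
  rw [abs_le]
  constructor <;> linarith

lemma abs_exp_neg_mul_sub_one_mul_rpow_le_mul_rpow (a : ℝ) (ht : 0 < t) (hlam : 0 ≤ lam) :
    |(exp (-t * lam) - 1) * t ^ a| ≤ lam * t ^ (a + 1) := by
  rw [abs_mul, abs_of_pos (rpow_pos_of_pos ht a), rpow_add_one ht.ne']
  calc _ ≤ t * lam * t ^ a := by gcongr; exact abs_exp_neg_mul_sub_one_le_mul ht.le hlam
    _ = lam * (t ^ a * t) := by ring

lemma abs_exp_neg_mul_sub_one_mul_rpow_le_rpow (a : ℝ) (ht : 0 ≤ t) (hlam : 0 ≤ lam) :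
    |(exp (-t * lam) - 1) * t ^ a| ≤ t ^ a := by
  rw [abs_mul, abs_of_nonneg (rpow_nonneg ht a)]
  exact mul_le_of_le_one_left (rpow_nonneg ht a) (abs_exp_neg_mul_sub_one_le_one ht hlam)

lemma integrableOn_Ioi_exp_neg_mul_sub_one_mul_rpow (ha₁ : -2 < a) (ha₂ : a < -1)
    (hlam : 0 ≤ lam) : IntegrableOn (fun t ↦ (exp (-t * lam) - 1) * t ^ a) (Ioi 0) := by
  rw [← Ioc_union_Ioi_eq_Ioi zero_le_one, integrableOn_union]
  constructor
  · have hbound : IntegrableOn (fun t : ℝ ↦ t ^ (a + 1)) (Ioc 0 1) :=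
      (intervalIntegral.intervalIntegrable_rpow' (by linarith)).1
    refine Integrable.mono' (hbound.const_mul lam) (by fun_prop) ?_
    filter_upwards [self_mem_ae_restrict measurableSet_Ioc] with t ht
    exact abs_exp_neg_mul_sub_one_mul_rpow_le_mul_rpow a ht.1 hlam
  · refine Integrable.mono' (integrableOn_Ioi_rpow_of_lt ha₂ one_pos) (by fun_prop) ?_
    filter_upwards [self_mem_ae_restrict measurableSet_Ioi] with t ht
    exact abs_exp_neg_mul_sub_one_mul_rpow_le_rpow a (zero_le_one.trans ht.le) hlam

lemma tendsto_exp_neg_mul_sub_one_mul_rpow_nhdsGT_zero (ha : -1 < a) (hlam : 0 ≤ lam) :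
    Tendsto (fun t ↦ (exp (-t * lam) - 1) * t ^ a) (𝓝[>] 0) (𝓝 0) := by
  have hbound : Tendsto (fun t : ℝ ↦ lam * t ^ (a + 1)) (𝓝[>] 0) (𝓝 0) := by
    have h := ((continuousAt_rpow_const 0 (a + 1) (Or.inr (by linarith))).tendsto).const_mul lam
    rw [zero_rpow (by linarith), mul_zero] at h
    exact h.mono_left nhdsWithin_le_nhds
  refine squeeze_zero_norm' ?_ hbound
  filter_upwards [self_mem_nhdsWithin] with t ht
  exact abs_exp_neg_mul_sub_one_mul_rpow_le_mul_rpow a ht hlam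

lemma tendsto_exp_neg_mul_sub_one_mul_rpow_atTop (ha : a < 0) (hlam : 0 ≤ lam) :
    Tendsto (fun t ↦ (exp (-t * lam) - 1) * t ^ a) atTop (𝓝 0) := by
  have hbound : Tendsto (fun t : ℝ ↦ t ^ a) atTop (𝓝 0) := by
    simpa using tendsto_rpow_neg_atTop (neg_pos.mpr ha)
  refine squeeze_zero_norm' ?_ hbound
  filter_upwards [eventually_ge_atTop 0] with t ht
  exact abs_exp_neg_mul_sub_one_mul_rpow_le_rpow a ht hlam

lemma hasDerivAt_exp_neg_mul_sub_one_mul_rpow (ht : t ≠ 0) :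
    HasDerivAt (fun t ↦ (exp (-t * lam) - 1) * t ^ a)
      (-lam * (t ^ a * exp (-t * lam)) + a * ((exp (-t * lam) - 1) * t ^ (a - 1))) t := by
  have hexp : HasDerivAt (fun t ↦ exp (-t * lam) - 1) (exp (-t * lam) * (-1 * lam)) t :=
    (((hasDerivAt_id t).neg).mul_const lam).exp.sub_const 1
  exact (hexp.mul (hasDerivAt_rpow_const (Or.inl ht))).congr_deriv (by ring)

lemma mul_integral_Ioi_exp_neg_mul_sub_one_mul_rpow (hs : s ∈ Ioo 0 1) (hlam : 0 < lam) :
    s * ∫ t in Ioi 0, (exp (-t * lam) - 1) * t ^ (-s - 1) =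
      -lam * ∫ t in Ioi 0, t ^ (-s) * exp (-t * lam) := by
  obtain ⟨hs₀, hs₁⟩ := hs
  have hgamma : IntegrableOn (fun t ↦ t ^ (-s) * exp (-t * lam)) (Ioi 0) := by
    simpa [neg_mul, mul_comm lam] using
      integrableOn_rpow_mul_exp_neg_mul_rpow (p := 1) (s := -s) (by linarith) one_pos hlam
  have hint := integrableOn_Ioi_exp_neg_mul_sub_one_mul_rpow (a := -s - 1) (by linarith)
    (by linarith) hlam.le
  have hftc := integral_Ioi_of_hasDerivAt_of_tendsto
    (continuousWithinAt_Ioi_iff_Ici.mp ?_)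
    (fun t ht ↦ hasDerivAt_exp_neg_mul_sub_one_mul_rpow (lam := lam) (a := -s) (ne_of_gt ht))
    ((hgamma.const_mul (-lam)).add (hint.const_mul (-s)))
    (tendsto_exp_neg_mul_sub_one_mul_rpow_atTop (neg_neg_of_pos hs₀) hlam.le)
  · rw [integral_add (hgamma.const_mul _) (hint.const_mul _), integral_const_mul,
      integral_const_mul] at hftc
    simp only [neg_zero, zero_mul, exp_zero, sub_self] at hftc
    linarith
  · simpa [ContinuousWithinAt] using
      tendsto_exp_neg_mul_sub_one_mul_rpow_nhdsGT_zero (a := -s) (by linarith) hlam.le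

lemma integral_Ioi_rpow_neg_mul_exp_neg_mul (hs : s < 1) (hlam : 0 < lam) :
    ∫ t in Ioi 0, t ^ (-s) * exp (-t * lam) = lam ^ (s - 1) * Gamma (1 - s) := by
  have h := integral_rpow_mul_exp_neg_mul_Ioi (a := 1 - s) (by linarith) hlam
  rw [one_div, inv_rpow hlam.le, ← rpow_neg hlam.le, neg_sub] at h
  simpa [neg_mul, mul_comm lam] using h

lemma eqOn_div_rpow_mul_rpow_neg (f : ℝ → ℝ) (a : ℝ) :
    EqOn (fun t ↦ f t / t ^ a) (fun t ↦ f t * t ^ (-a)) (Ioi 0) := fun t ht ↦ by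
  simp only [rpow_neg (le_of_lt ht), div_eq_mul_inv]

lemma integral_Ioi_exp_neg_mul_sub_one_div_rpow (hs : s ∈ Ioo 0 1) (hlam : 0 ≤ lam) :
    ∫ t in Ioi 0, (exp (-t * lam) - 1) / t ^ (s + 1) = Gamma (1 - s) / (-s) * lam ^ s := by
  rcases hlam.eq_or_lt with rfl | hlam
  · simp [zero_rpow hs.1.ne']
  have hibp := mul_integral_Ioi_exp_neg_mul_sub_one_mul_rpow hs hlam
  rw [integral_Ioi_rpow_neg_mul_exp_neg_mul hs.2 hlam, rpow_sub_one hlam.ne',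
    show -s - 1 = -(s + 1) by ring] at hibp
  rw [setIntegral_congr_fun measurableSet_Ioi (eqOn_div_rpow_mul_rpow_neg _ _)]
  have hpow : -lam * (lam ^ s / lam * Gamma (1 - s)) = -(lam ^ s * Gamma (1 - s)) := by
    field_simp
  rw [eq_comm, div_mul_eq_mul_div, div_eq_iff (neg_ne_zero.2 hs.1.ne')]
  linarith

end

/-- Balakrishnan integral representation of fractional powers: for `s ∈ (0,1)` and `λ ≥ 0`,
`λ^s = (1/Γ(-s)) ∫₀^∞ (e^{-tλ} - 1)/t^{s+1} dt`, where `Γ(-s) = Γ(1-s)/(-s)`. -/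
theorem balakrishnan_rpow (s lam : ℝ) (hs : s ∈ Ioo (0 : ℝ) 1) (hlam : 0 ≤ lam) :
    IntegrableOn (fun t : ℝ => (Real.exp (-t * lam) - 1) / t ^ (s + 1)) (Ioi 0) volume ∧
    lam ^ s =
      (1 / (Real.Gamma (1 - s) / (-s))) *
        ∫ t in Ioi (0 : ℝ), (Real.exp (-t * lam) - 1) / t ^ (s + 1) := by
  obtain ⟨hs₀, hs₁⟩ := hs
  refine ⟨?_, ?_⟩
  · exact (integrableOn_Ioi_exp_neg_mul_sub_one_mul_rpow (by linarith) (by linarith)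
      hlam).congr_fun (eqOn_div_rpow_mul_rpow_neg _ _).symm measurableSet_Ioi
  · have hΓ : Gamma (1 - s) / (-s) ≠ 0 :=
      div_ne_zero (Gamma_pos_of_pos (by linarith)).ne' (neg_ne_zero.2 hs₀.ne')
    rw [integral_Ioi_exp_neg_mul_sub_one_div_rpow ⟨hs₀, hs₁⟩ hlam, one_div,
      inv_mul_cancel_left₀ hΓ]
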